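/- Downward Löwenheim–Skolem for split signatures: Let Σ be split by Λ into {Σ_λ}, let 𝔸 be a Σ-structure, and for each λ let κ_λ be a cardinal with max(ℵ₀, |Σ_λ|) ≤ κ_λ ≤ min{|σ^𝔸| : σ ∈ λ, σ^𝔸 infinite}, together with sets A_σ ⊆ σ^𝔸 of size ≤ κ_λ for each infinite σ ∈ λ. Then there is an elementary substructure 𝔹 of 𝔸 with |σ^𝔹| = κ_λ and A_σ ⊆ σ^𝔹 for each infinite-sorted σ ∈ λ, and σ^𝔹 = σ^𝔸 for each sort with σ^𝔸 finite. -/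

import Mathlib

/-!
In a fixed structure every formula is a boolean combination of finitely many formulas, each
lying in a single part. Quantifying a variable of sort `s` only interacts with the members from
the part of `s`: after freezing the truth values of the others, the dependence of any formula on
one variable of sort `s` is expressed by a formula of the part of `s`. So the Tarski–Vaught test
only needs witnesses for formulas of the part of the quantified sort, whose parameters lie in
sorts of that same part. As part `λ` has at most `max ℵ₀ |Σ_λ|` formulas, closing a set
countably often under the functions of `𝔸` and under such witnesses adds at most `κ_λ` elements
to the sorts of part `λ`. Starting from `A_σ`, enlarged to size `κ_λ` on infinite sorts, and from
all of `σ^𝔸` on finite sorts, gives `𝔹`.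
-/

set_option autoImplicit false

/-- A many-sorted first-order signature. -/
structure MSSignature : Type 1 where
  Sorts : Type
  Func : Type
  Pred : Type
  funcDom : Func → List Sorts
  funcCod : Func → Sorts
  predDom : Pred → List Sorts

namespace MS

variable (Sg : MSSignature)

/-- Many-sorted terms; variables of each sort are indexed by naturals. -/
inductive Term : Sg.Sorts → Type where
  | var (s : Sg.Sorts) (n : ℕ) : Term s
  | app (f : Sg.Func)
      (args : ∀ i : Fin (Sg.funcDom f).length, Term ((Sg.funcDom f).get i)) :
      Term (Sg.funcCod f)

/-- Many-sorted first-order formulas. -/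
inductive Formula : Type where
  | eq {s : Sg.Sorts} (t u : Term Sg s) : Formula
  | pred (P : Sg.Pred)
      (args : ∀ i : Fin (Sg.predDom P).length, Term Sg ((Sg.predDom P).get i)) : Formula
  | falsum : Formula
  | imp (φ ψ : Formula) : Formula
  | all (s : Sg.Sorts) (n : ℕ) (φ : Formula) : Formula

/-- A structure for a many-sorted signature: each sort gets a nonempty domain. -/
structure Structure : Type 1 where
  dom : Sg.Sorts → Type
  dom_nonempty : ∀ s, Nonempty (dom s)
  interpFunc : ∀ f : Sg.Func,
    (∀ i : Fin (Sg.funcDom f).length, dom ((Sg.funcDom f).get i)) → dom (Sg.funcCod f)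
  interpPred : ∀ P : Sg.Pred,
    (∀ i : Fin (Sg.predDom P).length, dom ((Sg.predDom P).get i)) → Prop

variable {Sg}

/-- Variable assignments. -/
def Assign (A : Structure Sg) : Type := ∀ s : Sg.Sorts, ℕ → A.dom s

open Classical in
noncomputable
def Assign.update {A : Structure Sg} (ν : Assign A) (s : Sg.Sorts) (n : ℕ) (a : A.dom s) :
    Assign A := fun t m =>
  if h : s = t then (if m = n then h ▸ a else ν t m) else ν t m

def Term.eval {A : Structure Sg} (ν : Assign A) : ∀ {s : Sg.Sorts}, Term Sg s → A.dom s
  | _, .var s n => ν s n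
  | _, .app f args => A.interpFunc f fun i => Term.eval ν (args i)

/-- Tarskian satisfaction. -/
def Sat (A : Structure Sg) (ν : Assign A) : Formula Sg → Prop
  | .eq t u => t.eval ν = u.eval ν
  | .pred P args => A.interpPred P fun i => (args i).eval ν
  | .falsum => False
  | .imp φ ψ => Sat A ν φ → Sat A ν ψ
  | .all s n φ => ∀ a : A.dom s, Sat A (ν.update s n a) φ

/-- Derived connectives. -/
def Formula.not (φ : Formula Sg) : Formula Sg := .imp φ .falsum
def Formula.and (φ ψ : Formula Sg) : Formula Sg := (Formula.imp φ ψ.not).not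
def Formula.or (φ ψ : Formula Sg) : Formula Sg := .imp φ.not ψ
def Formula.ex (s : Sg.Sorts) (n : ℕ) (φ : Formula Sg) : Formula Sg :=
  ((Formula.all s n φ.not)).not
def Formula.andList : List (Formula Sg) → Formula Sg :=
  List.foldr Formula.and (Formula.not .falsum)
def Formula.orList : List (Formula Sg) → Formula Sg :=
  List.foldr Formula.or .falsum

/-- Occurrence of variable `(s, n)` in a term. -/
def Term.varOccurs (s : Sg.Sorts) (n : ℕ) : ∀ {t : Sg.Sorts}, Term Sg t → Prop
  | _, .var s' n' => s = s' ∧ n = n'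
  | _, .app _ args => ∃ i, Term.varOccurs s n (args i)

/-- Free occurrence of variable `(s, n)` in a formula. -/
def Formula.varFree (s : Sg.Sorts) (n : ℕ) : Formula Sg → Prop
  | .eq t u => t.varOccurs s n ∨ u.varOccurs s n
  | .pred _ args => ∃ i, (args i).varOccurs s n
  | .falsum => False
  | .imp φ ψ => φ.varFree s n ∨ ψ.varFree s n
  | .all s' n' φ => φ.varFree s n ∧ ¬(s = s' ∧ n = n')

def Formula.IsSentence (φ : Formula Sg) : Prop := ∀ s n, ¬ φ.varFree s n

/-- Quantifier-free formulas. -/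
def Formula.IsQF : Formula Sg → Prop
  | .eq _ _ => True
  | .pred _ _ => True
  | .falsum => True
  | .imp φ ψ => φ.IsQF ∧ ψ.IsQF
  | .all _ _ _ => False

/-- A structure is a model of a set of formulas (a theory) if it satisfies
every axiom under every assignment. -/
def Models (A : Structure Sg) (T : Set (Formula Sg)) : Prop :=
  ∀ φ ∈ T, ∀ ν : Assign A, Sat A ν φ

/-- Elementary equivalence: same sentences hold. -/
def ElemEquiv (A B : Structure Sg) : Prop :=
  ∀ φ : Formula Sg, φ.IsSentence →
    ((∀ ν : Assign A, Sat A ν φ) ↔ (∀ ν : Assign B, Sat B ν φ))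

/-- Substructures: sort-wise subsets closed under the functions. -/
structure Substructure (A : Structure Sg) : Type 1 where
  carrier : ∀ s : Sg.Sorts, Set (A.dom s)
  carrier_nonempty : ∀ s, (carrier s).Nonempty
  closed : ∀ (f : Sg.Func)
    (args : ∀ i : Fin (Sg.funcDom f).length, A.dom ((Sg.funcDom f).get i)),
    (∀ i, args i ∈ carrier _) → A.interpFunc f args ∈ carrier _

/-- The induced structure on a substructure. -/
def Substructure.toStructure {A : Structure Sg} (B : Substructure A) : Structure Sg where
  dom s := ↥(B.carrier s)
  dom_nonempty s := ⟨⟨(B.carrier_nonempty s).choose, (B.carrier_nonempty s).choose_spec⟩⟩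
  interpFunc f args :=
    ⟨A.interpFunc f fun i => (args i).1, B.closed f _ fun i => (args i).2⟩
  interpPred P args := A.interpPred P fun i => (args i).1

/-- View an assignment into a substructure as an assignment into the ambient structure. -/
def Substructure.amb {A : Structure Sg} (B : Substructure A)
    (ν : Assign B.toStructure) : Assign A := fun s n => (ν s n).1

/-- `B` is an elementary substructure of `A`. -/
def Substructure.IsElementary {A : Structure Sg} (B : Substructure A) : Prop :=
  ∀ (φ : Formula Sg) (ν : Assign B.toStructure),
    Sat B.toStructure ν φ ↔ Sat A (B.amb ν) φ

/-- Isomorphisms of structures. -/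
structure Iso (A B : Structure Sg) : Type 1 where
  toEquiv : ∀ s, A.dom s ≃ B.dom s
  map_func : ∀ (f : Sg.Func) args,
    toEquiv _ (A.interpFunc f args) = B.interpFunc f (fun i => toEquiv _ (args i))
  map_pred : ∀ (P : Sg.Pred) args,
    A.interpPred P args ↔ B.interpPred P (fun i => toEquiv _ (args i))

end MS

/-- The cardinality of a signature: sorts + function symbols + predicate symbols. -/
noncomputable def MSSignature.card (Sg : MSSignature) : Cardinal :=
  Cardinal.mk Sg.Sorts + Cardinal.mk Sg.Func + Cardinal.mk Sg.Pred

/-- A countable signature. -/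
def MSSignature.IsCountable (Sg : MSSignature) : Prop :=
  Countable Sg.Sorts ∧ Countable Sg.Func ∧ Countable Sg.Pred

namespace MS

variable {Sg : MSSignature}

/-- A splitting of a signature by a partition `Λ` of its sorts: every function and
predicate symbol uses sorts from a single part only. -/
structure Split (Sg : MSSignature) (Λ : Type) where
  sortPart : Sg.Sorts → Λ
  funcPart : Sg.Func → Λ
  predPart : Sg.Pred → Λ
  func_dom : ∀ (f : Sg.Func) (i : Fin (Sg.funcDom f).length),
    sortPart ((Sg.funcDom f).get i) = funcPart f
  func_cod : ∀ f : Sg.Func, sortPart (Sg.funcCod f) = funcPart f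
  pred_dom : ∀ (P : Sg.Pred) (i : Fin (Sg.predDom P).length),
    sortPart ((Sg.predDom P).get i) = predPart P

/-- A term lies in the sub-signature `Σ_l`. -/
def Term.inPart {Λ : Type} (sp : Split Sg Λ) (l : Λ) :
    ∀ {s : Sg.Sorts}, Term Sg s → Prop
  | s, .var _ _ => sp.sortPart s = l
  | _, .app f args => sp.funcPart f = l ∧ ∀ i, Term.inPart sp l (args i)

/-- A formula lies in the sub-signature `Σ_l`: all its symbols and the sorts of all
its variables belong to the part `l`. -/
def Formula.inPart {Λ : Type} (sp : Split Sg Λ) (l : Λ) : Formula Sg → Prop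
  | .eq (s := s) t u => sp.sortPart s = l ∧ t.inPart sp l ∧ u.inPart sp l
  | .pred P args => sp.predPart P = l ∧ ∀ i, (args i).inPart sp l
  | .falsum => True
  | .imp φ ψ => φ.inPart sp l ∧ ψ.inPart sp l
  | .all s _ φ => sp.sortPart s = l ∧ φ.inPart sp l

/-- A generalized `Λ`-cube: a conjunction of formulas, each over a single
sub-signature, with pairwise distinct parts. -/
def Formula.IsGenCube {Λ : Type} (sp : Split Sg Λ) (φ : Formula Sg) : Prop :=
  ∃ L : List (Λ × Formula Sg), (L.map Prod.fst).Nodup ∧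
    (∀ p ∈ L, (p.2).inPart sp p.1) ∧ φ = Formula.andList (L.map Prod.snd)

/-- A generalized `Λ`-clause: a disjunction of formulas, each over a single
sub-signature, with pairwise distinct parts. -/
def Formula.IsGenClause {Λ : Type} (sp : Split Sg Λ) (φ : Formula Sg) : Prop :=
  ∃ L : List (Λ × Formula Sg), (L.map Prod.fst).Nodup ∧
    (∀ p ∈ L, (p.2).inPart sp p.1) ∧ φ = Formula.orList (L.map Prod.snd)

/-- Generalized disjunctive normal form: a disjunction of generalized cubes. -/
def Formula.IsGDNF {Λ : Type} (sp : Split Sg Λ) (φ : Formula Sg) : Prop :=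
  ∃ L : List (Formula Sg), (∀ ψ ∈ L, ψ.IsGenCube sp) ∧ φ = Formula.orList L

/-- Generalized conjunctive normal form: a conjunction of generalized clauses. -/
def Formula.IsGCNF {Λ : Type} (sp : Split Sg Λ) (φ : Formula Sg) : Prop :=
  ∃ L : List (Formula Sg), (∀ ψ ∈ L, ψ.IsGenClause sp) ∧ φ = Formula.andList L

/-- Logical equivalence of many-sorted formulas. -/
def LogEquiv (φ ψ : Formula Sg) : Prop :=
  ∀ (A : Structure Sg) (ν : Assign A), Sat A ν φ ↔ Sat A ν ψ

/-- The cardinality of the sub-signature `Σ_l` determined by a splitting. -/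
noncomputable def Split.partCard {Λ : Type} (sp : Split Sg Λ) (l : Λ) : Cardinal :=
  Cardinal.mk {s : Sg.Sorts // sp.sortPart s = l} +
    Cardinal.mk {f : Sg.Func // sp.funcPart f = l} +
    Cardinal.mk {P : Sg.Pred // sp.predPart P = l}

end MS

namespace Cardinal

universe u

lemma mk_sigma_le_of_le {ι : Type u} {β : ι → Type u} {κ : Cardinal.{u}} (hκ : ℵ₀ ≤ κ)
    (hι : #ι ≤ κ) (hβ : ∀ i, #(β i) ≤ κ) : #(Σ i, β i) ≤ κ := by
  rw [mk_sigma]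
  exact (sum_le_sum _ _ hβ).trans (by rw [sum_const']; exact mul_le_of_le hκ hι le_rfl)

lemma mk_pi_le_of_finite {ι : Type u} [Finite ι] {β : ι → Type u} {κ : Cardinal.{u}}
    (hκ : ℵ₀ ≤ κ) (hβ : ∀ i, #(β i) ≤ κ) : #(∀ i, β i) ≤ κ := by
  rw [mk_pi]
  exact (prod_le_prod _ _ hβ).trans (by rw [prod_const']; exact pow_le hκ (lt_aleph0_of_finite ι))

lemma exists_superset_mk_eq {α : Type} {T : Set α} {c : Cardinal} (hc : ℵ₀ ≤ c)
    (hT : #T ≤ c) (hα : c ≤ #α) : ∃ S : Set α, T ⊆ S ∧ #S = c := by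
  obtain ⟨U, hU⟩ := le_mk_iff_exists_set.1 hα
  refine ⟨T ∪ U, Set.subset_union_left, le_antisymm ?_ ?_⟩
  · exact (mk_union_le T U).trans (add_le_of_le hc hT hU.le)
  · exact hU ▸ mk_le_mk_of_subset Set.subset_union_right

end Cardinal

namespace MS

open Cardinal FirstOrder Filter

variable {Sg : MSSignature} {Λ : Type}

section Semantics

variable {A : Structure Sg}

@[simp]
lemma Assign.update_self (ν : Assign A) (s : Sg.Sorts) (n : ℕ) (a : A.dom s) :
    ν.update s n a s n = a := by
  simp [Assign.update]

lemma Assign.update_of_ne (ν : Assign A) {s t : Sg.Sorts} {n m : ℕ} (a : A.dom s)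
    (h : ¬(s = t ∧ n = m)) : ν.update s n a t m = ν t m := by
  unfold Assign.update
  split_ifs with hst hnm
  · exact absurd ⟨hst, hnm.symm⟩ h
  · rfl
  · rfl

lemma Term.eval_congr {ν ν' : Assign A} :
    ∀ {s : Sg.Sorts} (t : Term Sg s), (∀ u k, t.varOccurs u k → ν u k = ν' u k) →
      t.eval ν = t.eval ν'
  | _, .var s n, h => h s n ⟨rfl, rfl⟩
  | _, .app f args, h => congrArg (A.interpFunc f) <|
      funext fun i => Term.eval_congr (args i) fun u k hk => h u k ⟨i, hk⟩

lemma sat_congr : ∀ (φ : Formula Sg) {ν ν' : Assign A},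
    (∀ u k, φ.varFree u k → ν u k = ν' u k) → (Sat A ν φ ↔ Sat A ν' φ)
  | .eq t u, _, _, h => by
    rw [Sat, Sat, Term.eval_congr t fun a b hb => h a b (.inl hb),
      Term.eval_congr u fun a b hb => h a b (.inr hb)]
  | .pred P args, _, _, h => by
    simp only [Sat]
    rw [funext fun i => Term.eval_congr (args i) fun a b hb => h a b ⟨i, hb⟩]
  | .falsum, _, _, _ => Iff.rfl
  | .imp φ ψ, _, _, h => imp_congr (sat_congr φ fun a b hb => h a b (.inl hb))
      (sat_congr ψ fun a b hb => h a b (.inr hb))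
  | .all s n φ, ν, ν', h => forall_congr' fun a => sat_congr φ fun u k hk => by
    by_cases hc : s = u ∧ n = k
    · obtain ⟨rfl, rfl⟩ := hc
      simp
    · rw [Assign.update_of_ne _ _ hc, Assign.update_of_ne _ _ hc]
      exact h u k ⟨hk, fun hh => hc ⟨hh.1.symm, hh.2.symm⟩⟩

variable (ν : Assign A) (φ ψ : Formula Sg)

@[simp] lemma sat_falsum : ¬ Sat A ν .falsum := id

@[simp] lemma sat_imp : Sat A ν (.imp φ ψ) ↔ (Sat A ν φ → Sat A ν ψ) := Iff.rfl

@[simp] lemma sat_not : Sat A ν φ.not ↔ ¬ Sat A ν φ := Iff.rfl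

@[simp] lemma sat_and : Sat A ν (φ.and ψ) ↔ Sat A ν φ ∧ Sat A ν ψ := by
  simp [Formula.and]

@[simp] lemma sat_or : Sat A ν (φ.or ψ) ↔ Sat A ν φ ∨ Sat A ν ψ := by
  simp [Formula.or, or_iff_not_imp_left]

@[simp] lemma sat_andList (L : List (Formula Sg)) :
    Sat A ν (Formula.andList L) ↔ ∀ φ ∈ L, Sat A ν φ := by
  induction L <;> simp_all [Formula.andList]

@[simp] lemma sat_orList (L : List (Formula Sg)) :
    Sat A ν (Formula.orList L) ↔ ∃ φ ∈ L, Sat A ν φ := by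
  induction L <;> simp_all [Formula.orList]

end Semantics

section Parts

variable (sp : Split Sg Λ) {l : Λ}

lemma Term.inPart_of_sortPart : ∀ {s : Sg.Sorts} (t : Term Sg s), sp.sortPart s = l →
    t.inPart sp l
  | _, .var _ _, h => h
  | _, .app f args, h => by
    have hf : sp.funcPart f = l := sp.func_cod f ▸ h
    exact ⟨hf, fun i => Term.inPart_of_sortPart (args i) (sp.func_dom f i ▸ hf)⟩

lemma Term.sortPart_of_varOccurs : ∀ {s : Sg.Sorts} (t : Term Sg s), t.inPart sp l →
    ∀ {u k}, t.varOccurs u k → sp.sortPart u = l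
  | _, .var _ _, h, _, _, ho => by obtain ⟨rfl, rfl⟩ := ho; exact h
  | _, .app _ args, h, _, _, ho => by
    obtain ⟨i, hi⟩ := ho
    exact Term.sortPart_of_varOccurs (args i) (h.2 i) hi

lemma Formula.sortPart_of_varFree : ∀ (φ : Formula Sg), φ.inPart sp l →
    ∀ {u k}, φ.varFree u k → sp.sortPart u = l
  | .eq t u, h, _, _, hf => hf.elim (Term.sortPart_of_varOccurs sp t h.2.1)
      (Term.sortPart_of_varOccurs sp u h.2.2)
  | .pred _ args, h, _, _, hf => by
    obtain ⟨i, hi⟩ := hf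
    exact Term.sortPart_of_varOccurs sp (args i) (h.2 i) hi
  | .imp φ ψ, h, _, _, hf => hf.elim (Formula.sortPart_of_varFree φ h.1)
      (Formula.sortPart_of_varFree ψ h.2)
  | .all _ _ φ, h, _, _, hf => Formula.sortPart_of_varFree φ h.2 hf.1

lemma Formula.inPart_not {φ : Formula Sg} (h : φ.inPart sp l) : φ.not.inPart sp l :=
  ⟨h, trivial⟩

lemma Formula.inPart_andList : ∀ {L : List (Formula Sg)}, (∀ φ ∈ L, φ.inPart sp l) →
    (Formula.andList L).inPart sp l
  | [], _ => ⟨trivial, trivial⟩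
  | φ :: _, h => ⟨⟨h φ List.mem_cons_self,
      Formula.inPart_andList fun ψ hψ => h ψ (List.mem_cons_of_mem φ hψ), trivial⟩, trivial⟩

lemma Formula.inPart_orList : ∀ {L : List (Formula Sg)}, (∀ φ ∈ L, φ.inPart sp l) →
    (Formula.orList L).inPart sp l
  | [], _ => trivial
  | φ :: _, h => ⟨⟨h φ List.mem_cons_self, trivial⟩,
      Formula.inPart_orList fun ψ hψ => h ψ (List.mem_cons_of_mem φ hψ)⟩

end Parts

def Formula.freeVars (φ : Formula Sg) : Set (Sg.Sorts × ℕ) := {p | φ.varFree p.1 p.2}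

lemma Term.finite_varOccurs : ∀ {s : Sg.Sorts} (t : Term Sg s),
    {p : Sg.Sorts × ℕ | t.varOccurs p.1 p.2}.Finite
  | _, .var s n => (Set.finite_singleton (s, n)).subset fun _ ⟨h1, h2⟩ => Prod.ext h1 h2
  | _, .app _ args => (Set.finite_iUnion fun i => Term.finite_varOccurs (args i)).subset
      fun _ ⟨i, hi⟩ => Set.mem_iUnion.2 ⟨i, hi⟩

lemma Formula.finite_freeVars : ∀ φ : Formula Sg, φ.freeVars.Finite
  | .eq t u => (t.finite_varOccurs.union u.finite_varOccurs).subset fun _ h => h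
  | .pred _ args => (Set.finite_iUnion fun i => (args i).finite_varOccurs).subset
      fun _ ⟨i, hi⟩ => Set.mem_iUnion.2 ⟨i, hi⟩
  | .falsum => Set.finite_empty.subset fun _ h => h.elim
  | .imp φ ψ => (φ.finite_freeVars.union ψ.finite_freeVars).subset fun _ h => h
  | .all _ _ φ => φ.finite_freeVars.subset fun _ h => h.1

section NormalForm

variable (sp : Split Sg Λ) {A : Structure Sg}

lemma sat_update_iff_of_sortPart_ne {l : Λ} {φ : Formula Sg} (h : φ.inPart sp l)
    {s : Sg.Sorts} (hs : sp.sortPart s ≠ l) (ν : Assign A) (m : ℕ) (a : A.dom s) :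
    Sat A (ν.update s m a) φ ↔ Sat A ν φ :=
  sat_congr φ fun _ _ hk => Assign.update_of_ne ν a
    fun hc => hs (hc.1 ▸ Formula.sortPart_of_varFree sp φ h hk)

lemma exists_inPart_sat_iff {ι : Type} [Finite ι] (l : Λ) (θ : ι → Formula Sg)
    (hθ : ∀ i, (θ i).inPart sp l) (G : (ι → Prop) → Prop) :
    ∃ χ : Formula Sg, χ.inPart sp l ∧
      ∀ (A : Structure Sg) (ν : Assign A), Sat A ν χ ↔ G fun i => Sat A ν (θ i) := by
  classical
  have := Fintype.ofFinite ι
  -- the disjunctive normal form of `G`, one cube for each truth assignment `w` satisfying it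
  let cube : (ι → Bool) → Formula Sg := fun w =>
    Formula.andList (Finset.univ.toList.map fun i => bif w i then θ i else (θ i).not)
  have sat_cube : ∀ (A : Structure Sg) (ν : Assign A) (w : ι → Bool),
      Sat A ν (cube w) ↔ (fun i => Sat A ν (θ i)) = fun i => w i = true := by
    intro A ν w
    simp only [cube, sat_andList, List.mem_map, Finset.mem_toList, Finset.mem_univ, true_and,
      forall_exists_index, forall_apply_eq_imp_iff, funext_iff, eq_iff_iff]
    exact forall_congr' fun i => by cases w i <;> simp
  refine ⟨Formula.orList (((Finset.univ.filter fun w => G (w · = true)).toList).map cube),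
    Formula.inPart_orList sp ?_, fun A ν => ?_⟩
  · simp only [List.mem_map, forall_exists_index, and_imp, forall_apply_eq_imp_iff₂]
    refine fun w _ => Formula.inPart_andList sp ?_
    simp only [List.mem_map, forall_exists_index, and_imp, forall_apply_eq_imp_iff₂]
    intro i _
    cases w i
    exacts [Formula.inPart_not sp (hθ i), hθ i]
  · simp only [sat_orList, List.mem_map, Finset.mem_toList, Finset.mem_filter,
      Finset.mem_univ, true_and, exists_exists_and_eq_and, sat_cube]
    refine ⟨fun ⟨w, hG, hw⟩ => hw ▸ hG, fun hG => ⟨fun i => decide (Sat A ν (θ i)), ?_, ?_⟩⟩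
    · simpa using hG
    · simp

open Classical in
lemma exists_inPart_sat_iff_ite {ι : Type} [Finite ι] {θ : ι → Formula Sg} {pt : ι → Λ}
    (hθ : ∀ i, (θ i).inPart sp (pt i)) (l : Λ) (P : ι → Prop) (F : (ι → Prop) → Prop) :
    ∃ χ : Formula Sg, χ.inPart sp l ∧ ∀ (A : Structure Sg) (ν : Assign A),
      Sat A ν χ ↔ F fun i => if pt i = l then Sat A ν (θ i) else P i := by
  obtain ⟨χ, hχ, hsat⟩ := exists_inPart_sat_iff sp l (fun i : {i // pt i = l} => θ i)
    (fun ⟨i, hi⟩ => hi ▸ hθ i) fun g => F fun i => if hi : pt i = l then g ⟨i, hi⟩ else P i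
  exact ⟨χ, hχ, fun A ν => (hsat A ν).trans (by simp only [dite_eq_ite])⟩

open Classical in
lemma ite_sat_update_eq {ι : Type} {θ : ι → Formula Sg} {pt : ι → Λ}
    (hθ : ∀ i, (θ i).inPart sp (pt i)) {ν : Assign A} {P : ι → Prop}
    (hP : ∀ i, P i ↔ Sat A ν (θ i)) (s : Sg.Sorts) (m : ℕ) (a : A.dom s) :
    (fun i => if pt i = sp.sortPart s then Sat A (ν.update s m a) (θ i) else P i) =
      fun i => Sat A (ν.update s m a) (θ i) := by
  funext i
  split_ifs with hi
  · rfl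
  · rw [hP, sat_update_iff_of_sortPart_ne sp (hθ i) (Ne.symm hi)]

theorem Formula.exists_sat_iff_combination (A : Structure Sg) (φ : Formula Sg) :
    ∃ (ι : Type) (_ : Finite ι) (θ : ι → Formula Sg) (pt : ι → Λ) (F : (ι → Prop) → Prop),
      (∀ i, (θ i).inPart sp (pt i)) ∧ ∀ ν : Assign A, Sat A ν φ ↔ F fun i => Sat A ν (θ i) := by
  induction φ with
  | @eq s t u =>
    exact ⟨Unit, inferInstance, fun _ => .eq t u, fun _ => sp.sortPart s, fun g => g (),
      fun _ => ⟨rfl, Term.inPart_of_sortPart sp t rfl, Term.inPart_of_sortPart sp u rfl⟩,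
      fun _ => Iff.rfl⟩
  | pred P args =>
    exact ⟨Unit, inferInstance, fun _ => .pred P args, fun _ => sp.predPart P, fun g => g (),
      fun _ => ⟨rfl, fun i => Term.inPart_of_sortPart sp (args i) (sp.pred_dom P i)⟩,
      fun _ => Iff.rfl⟩
  | falsum =>
    exact ⟨Empty, inferInstance, Empty.elim, Empty.elim, fun _ => False, nofun,
      fun _ => Iff.rfl⟩
  | imp φ ψ ihφ ihψ =>
    obtain ⟨ι₁, _, θ₁, pt₁, F₁, hθ₁, hF₁⟩ := ihφ
    obtain ⟨ι₂, _, θ₂, pt₂, F₂, hθ₂, hF₂⟩ := ihψ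
    refine ⟨ι₁ ⊕ ι₂, inferInstance, Sum.elim θ₁ θ₂, Sum.elim pt₁ pt₂,
      fun g => F₁ (fun i => g (.inl i)) → F₂ (fun i => g (.inr i)),
      Sum.rec hθ₁ hθ₂, fun ν => ?_⟩
    rw [sat_imp, hF₁, hF₂]
    rfl
  | all s m ψ ih =>
    classical
    obtain ⟨ι, _, θ, pt, F, hθ, hF⟩ := ih
    -- freezing the atoms outside the part of `s` at truth values `v` leaves a formula in that part
    choose χ hχ hsatχ using fun v : ι → Bool =>
      exists_inPart_sat_iff_ite sp hθ (sp.sortPart s) (fun i => v i = true) F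
    have hχψ : ∀ (ν : Assign A) (v : ι → Bool), (∀ i, v i = true ↔ Sat A ν (θ i)) →
        ∀ a, Sat A (ν.update s m a) (χ v) ↔ Sat A (ν.update s m a) ψ := fun ν v hv a => by
      rw [hsatχ, ite_sat_update_eq sp hθ hv, hF]
    refine ⟨ι ⊕ (ι → Bool), inferInstance, Sum.elim θ fun v => .all s m (χ v),
      Sum.elim pt fun _ => sp.sortPart s,
      fun g => ∃ v : ι → Bool, (∀ i, v i = true ↔ g (.inl i)) ∧ g (.inr v),
      Sum.rec hθ fun v => ⟨rfl, hχ v⟩, fun ν => ?_⟩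
    simp only [Sum.elim_inl, Sum.elim_inr]
    refine ⟨fun h => ⟨fun i => decide (Sat A ν (θ i)), fun i => decide_eq_true_iff,
      fun a => (hχψ ν _ (fun i => decide_eq_true_iff) a).2 (h a)⟩, ?_⟩
    rintro ⟨v, hv, h⟩ a
    exact (hχψ ν v hv a).1 (h a)

theorem Formula.exists_inPart_sat_update_iff (A : Structure Sg) (ψ : Formula Sg) (s : Sg.Sorts)
    (n : ℕ) (ν : Assign A) :
    ∃ θ : Formula Sg, θ.inPart sp (sp.sortPart s) ∧
      ∀ a : A.dom s, Sat A (ν.update s n a) ψ ↔ Sat A (ν.update s n a) θ := by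
  obtain ⟨ι, _, θ, pt, F, hθ, hF⟩ := ψ.exists_sat_iff_combination sp A
  obtain ⟨χ, hχ, hsatχ⟩ :=
    exists_inPart_sat_iff_ite sp hθ (sp.sortPart s) (fun i => Sat A ν (θ i)) F
  exact ⟨χ, hχ, fun a => by rw [hsatχ, ite_sat_update_eq sp hθ (fun _ => Iff.rfl), hF]⟩

end NormalForm

namespace Substructure

variable {A : Structure Sg} (B : Substructure A)

lemma amb_update (ν : Assign B.toStructure) (s : Sg.Sorts) (n : ℕ) (b : B.toStructure.dom s) :
    B.amb (ν.update s n b) = (B.amb ν).update s n b.1 := by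
  funext t m
  unfold amb Assign.update
  split_ifs with h <;> first | rfl | (subst h; rfl)

lemma eval_amb (ν : Assign B.toStructure) :
    ∀ {s : Sg.Sorts} (t : Term Sg s), (t.eval ν).1 = t.eval (B.amb ν)
  | _, .var _ _ => rfl
  | _, .app f args => congrArg (A.interpFunc f) <| funext fun i => eval_amb ν (args i)

theorem isElementary_of_exists (sp : Split Sg Λ)
    (hwit : ∀ (s : Sg.Sorts) (φ : Formula Sg), φ.inPart sp (sp.sortPart s) →
      ∀ (n : ℕ) (ν : Assign A), (∀ t m, ν t m ∈ B.carrier t) →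
      (∃ a, Sat A (ν.update s n a) φ) → ∃ b ∈ B.carrier s, Sat A (ν.update s n b) φ) :
    B.IsElementary := by
  intro φ
  induction φ with
  | eq t u =>
    intro ν
    simp only [Sat, ← eval_amb]
    exact Subtype.ext_iff
  | pred P args =>
    intro ν
    show A.interpPred P (fun i => ((args i).eval ν).1) ↔ _
    simp only [eval_amb, Sat]
  | falsum => exact fun _ => Iff.rfl
  | imp φ ψ ihφ ihψ => exact fun ν => imp_congr (ihφ ν) (ihψ ν)
  | all s m ψ ih =>
    intro ν
    simp only [Sat, ih, amb_update]
    refine ⟨fun h a => ?_, fun h b => h b.1⟩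
    by_contra hna
    -- a counterexample in `A` is seen by a formula of the part of `s`, which has one in `B`
    obtain ⟨θ, hθ, hψθ⟩ := ψ.exists_inPart_sat_update_iff sp A s m (B.amb ν)
    obtain ⟨b, hb, hθb⟩ := hwit s θ.not (Formula.inPart_not sp hθ) m (B.amb ν)
      (fun t k => (ν t k).2) ⟨a, (hψθ a).not.1 hna⟩
    exact hθb ((hψθ b).1 (h ⟨b, hb⟩))

end Substructure

namespace Split

variable (sp : Split Sg Λ) (l : Λ)

/-- `Fin 4` codes the logical symbols `=`, `⊥`, `→`, `∀`. -/
abbrev CodeSymbol : Type :=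
  {f : Sg.Func // sp.funcPart f = l} ⊕ {P : Sg.Pred // sp.predPart P = l} ⊕ Fin 4

/-- Terms and formulas of part `l` are coded as terms of this single-sorted language, in which
every symbol has every arity. -/
def codeLang : Language := ⟨fun _ => sp.CodeSymbol l, fun _ => Empty⟩

abbrev CodeVar : Type := {s : Sg.Sorts // sp.sortPart s = l} × ℕ

variable {sp l}

lemma codeLang_func_inj {m n : ℕ} {c c' : sp.CodeSymbol l}
    {ts : Fin m → (sp.codeLang l).Term (sp.CodeVar l)} {ts' : Fin n → _}
    (h : Language.Term.func (L := sp.codeLang l) c ts = .func c' ts') :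
    c = c' ∧ (⟨m, ts⟩ : Σ k, Fin k → _) = ⟨n, ts'⟩ := by
  cases h
  exact ⟨rfl, rfl⟩

end Split

variable {sp : Split Sg Λ} {l : Λ}

def Term.code : ∀ {s : Sg.Sorts} (t : Term Sg s), t.inPart sp l →
    (sp.codeLang l).Term (sp.CodeVar l)
  | _, .var s n, h => .var (⟨s, h⟩, n)
  | _, .app f args, h => .func (.inl ⟨f, h.1⟩) fun i => Term.code (args i) (h.2 i)

lemma Term.code_inj : ∀ {s : Sg.Sorts} (t : Term Sg s) (h : t.inPart sp l) {s' : Sg.Sorts}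
    (t' : Term Sg s') (h' : t'.inPart sp l), Term.code t h = Term.code t' h' →
    (⟨s, t⟩ : Σ s, Term Sg s) = ⟨s', t'⟩
  | _, .var _ _, _, _, .var _ _, _, e => by cases e; rfl
  | _, .var _ _, _, _, .app _ _, _, e => by cases e
  | _, .app _ _, _, _, .var _ _, _, e => by cases e
  | _, .app f args, h, _, .app g args', h', e => by
    obtain ⟨hfg, e⟩ := Split.codeLang_func_inj e
    obtain rfl : f = g := by simpa using hfg
    obtain rfl : args = args' := funext fun i => by
      have := Term.code_inj _ _ _ _ (congrFun (eq_of_heq (Sigma.mk.inj e).2) i)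
      exact eq_of_heq (Sigma.mk.inj this).2
    rfl

def Formula.code : ∀ φ : Formula Sg, φ.inPart sp l → (sp.codeLang l).Term (sp.CodeVar l)
  | .eq t u, h => .func (.inr (.inr 0)) ![t.code h.2.1, u.code h.2.2]
  | .pred P args, h => .func (.inr (.inl ⟨P, h.1⟩)) fun i => (args i).code (h.2 i)
  | .falsum, _ => .func (.inr (.inr 1)) ![]
  | .imp φ ψ, h => .func (.inr (.inr 2)) ![φ.code h.1, ψ.code h.2]
  | .all s n φ, h => .func (.inr (.inr 3)) ![.var (⟨s, h.1⟩, n), φ.code h.2]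

lemma Formula.code_inj (φ : Formula Sg) (h : φ.inPart sp l) (φ' : Formula Sg)
    (h' : φ'.inPart sp l) (e : φ.code h = φ'.code h') : φ = φ' := by
  -- distinct constructors get distinct code symbols, so only the diagonal cases survive
  induction φ generalizing φ' <;> cases φ' <;> obtain ⟨hc, e⟩ := Split.codeLang_func_inj e <;>
    simp only [reduceCtorEq, Sum.inr.injEq, Fin.reduceEq, Subtype.mk.injEq, Sum.inl.injEq] at hc
  case eq.eq t u _ t' u' _ =>
    have e := eq_of_heq (Sigma.mk.inj e).2
    cases Term.code_inj t _ t' _ (congrFun e 0)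
    cases Term.code_inj u _ u' _ (congrFun e 1)
    rfl
  case pred.pred P args P' args' _ =>
    subst hc
    have e := eq_of_heq (Sigma.mk.inj e).2
    obtain rfl : args = args' := funext fun i =>
      eq_of_heq (Sigma.mk.inj (Term.code_inj _ _ _ _ (congrFun e i))).2
    rfl
  case falsum.falsum => rfl
  case imp.imp ihφ ihψ φ' ψ' _ =>
    have e := eq_of_heq (Sigma.mk.inj e).2
    rw [ihφ _ _ _ (congrFun e 0), ihψ _ _ _ (congrFun e 1)]
  case all.all s n φ ih s' n' φ' _ =>
    have e := eq_of_heq (Sigma.mk.inj e).2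
    cases congrFun e 0
    rw [ih _ _ _ (congrFun e 1)]

lemma Split.mk_sorts_le_partCard (sp : Split Sg Λ) (l : Λ) :
    #{s : Sg.Sorts // sp.sortPart s = l} ≤ sp.partCard l :=
  le_self_add.trans le_self_add

lemma Split.mk_funcs_le_partCard (sp : Split Sg Λ) (l : Λ) :
    #{f : Sg.Func // sp.funcPart f = l} ≤ sp.partCard l :=
  le_add_self.trans le_self_add

lemma Split.mk_preds_le_partCard (sp : Split Sg Λ) (l : Λ) :
    #{P : Sg.Pred // sp.predPart P = l} ≤ sp.partCard l :=
  le_add_self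

theorem Formula.mk_inPart_le (sp : Split Sg Λ) (l : Λ) :
    #{φ : Formula Sg // φ.inPart sp l} ≤ max ℵ₀ (sp.partCard l) := by
  set C := max ℵ₀ (sp.partCard l)
  have hC : ℵ₀ ≤ C := le_max_left _ _
  have hpart : sp.partCard l ≤ C := le_max_right _ _
  have hsorts := (sp.mk_sorts_le_partCard l).trans hpart
  have hfuncs := (sp.mk_funcs_le_partCard l).trans hpart
  have hpreds := (sp.mk_preds_le_partCard l).trans hpart
  have hvars : #(sp.CodeVar l) ≤ C := by
    rw [mk_prod, lift_id, lift_id, mk_nat]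
    exact mul_le_of_le hC hsorts hC
  have hsymbols : #(Σ n, (sp.codeLang l).Functions n) ≤ C := by
    change #(Σ _ : ℕ, sp.CodeSymbol l) ≤ C
    rw [mk_sigma, sum_const', mk_nat, mk_sum, mk_sum, lift_id, lift_id, lift_id, lift_id, mk_fin]
    exact mul_le_of_le hC hC (add_le_of_le hC hfuncs (add_le_of_le hC hpreds
      ((natCast_lt_aleph0 (n := 4)).le.trans hC)))
  refine (mk_le_of_injective (f := fun φ : {φ : Formula Sg // φ.inPart sp l} => φ.1.code φ.2)
    fun φ ψ e => Subtype.ext (φ.1.code_inj φ.2 ψ.1 ψ.2 e)).trans <|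
    Language.Term.card_le.trans <| max_le hC ?_
  rw [mk_sum, lift_id, lift_id]
  exact add_le_of_le hC hvars hsymbols

section Hull

variable (sp : Split Sg Λ) {A : Structure Sg}

noncomputable def witness (φ : Formula Sg) (s : Sg.Sorts) (n : ℕ) (ν : Assign A) : A.dom s :=
  @Classical.epsilon _ (A.dom_nonempty s) fun a => Sat A (ν.update s n a) φ

lemma sat_update_witness {φ : Formula Sg} {s : Sg.Sorts} {n : ℕ} {ν : Assign A}
    (h : ∃ a, Sat A (ν.update s n a) φ) : Sat A (ν.update s n (witness φ s n ν)) φ :=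
  Classical.epsilon_spec h

open Classical in
noncomputable def Formula.assignOf (φ : Formula Sg) (p : ∀ x : φ.freeVars, A.dom x.1.1) :
    Assign A :=
  fun t m => if h : φ.varFree t m then p ⟨(t, m), h⟩ else Classical.choice (A.dom_nonempty t)

lemma Formula.sat_update_assignOf_iff (φ : Formula Sg) (ν : Assign A) (s : Sg.Sorts) (n : ℕ)
    (a : A.dom s) : Sat A ((φ.assignOf fun x => ν x.1.1 x.1.2).update s n a) φ ↔
      Sat A (ν.update s n a) φ := by
  refine sat_congr φ fun t m hf => ?_
  by_cases hc : s = t ∧ n = m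
  · obtain ⟨rfl, rfl⟩ := hc
    simp
  · simp [Assign.update_of_ne _ _ hc, Formula.assignOf, hf]

variable (A)

/-- One step of the Skolem hull. Sort `s` only receives witnesses for formulas of its own part,
each depending only on the values of its free variables, so the step stays within the `κ` of that
part. -/
def hullStep (D : ∀ s, Set (A.dom s)) (s : Sg.Sorts) : Set (A.dom s) :=
  D s ∪ Set.range (fun x : Σ f : {f // Sg.funcCod f = s}, ∀ i, D ((Sg.funcDom f.1).get i) =>
      x.1.2 ▸ A.interpFunc x.1.1 fun i => (x.2 i).1) ∪
    Set.range (fun x : Σ φ : {φ : Formula Sg // φ.inPart sp (sp.sortPart s)},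
        ℕ × ∀ v : φ.1.freeVars, D v.1.1 =>
      witness x.1.1 s x.2.1 (x.1.1.assignOf fun v => (x.2.2 v).1))

def hull (S : ∀ s, Set (A.dom s)) (s : Sg.Sorts) : Set (A.dom s) :=
  ⋃ k, (hullStep sp A)^[k] S s

variable {sp A} (S : ∀ s, Set (A.dom s))

lemma monotone_iterate_hullStep : Monotone fun k => (hullStep sp A)^[k] S :=
  monotone_nat_of_le_succ fun k s => by
    rw [Function.iterate_succ_apply']
    exact Set.subset_union_left.trans Set.subset_union_left

lemma subset_hull (s : Sg.Sorts) : S s ⊆ hull sp A S s :=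
  Set.subset_iUnion (fun k => (hullStep sp A)^[k] S s) 0

lemma eventually_mem_iterate_hullStep {s : Sg.Sorts} {a : A.dom s} (ha : a ∈ hull sp A S s) :
    ∀ᶠ k in atTop, a ∈ (hullStep sp A)^[k] S s := by
  obtain ⟨k, hk⟩ := Set.mem_iUnion.1 ha
  exact eventually_atTop.2 ⟨k, fun k' hk' => monotone_iterate_hullStep S hk' s hk⟩

lemma iterate_hullStep_succ_subset_hull (k : ℕ) (s : Sg.Sorts) :
    hullStep sp A ((hullStep sp A)^[k] S) s ⊆ hull sp A S s := by
  rw [← Function.iterate_succ_apply' (hullStep sp A)]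
  exact Set.subset_iUnion (fun k => (hullStep sp A)^[k] S s) (k + 1)

lemma interpFunc_mem_hull (f : Sg.Func)
    (args : ∀ i : Fin (Sg.funcDom f).length, A.dom ((Sg.funcDom f).get i))
    (hargs : ∀ i, args i ∈ hull sp A S _) : A.interpFunc f args ∈ hull sp A S _ := by
  obtain ⟨k, hk⟩ := (eventually_all.2 fun i => eventually_mem_iterate_hullStep S (hargs i)).exists
  exact iterate_hullStep_succ_subset_hull S k _ (.inl (.inr ⟨⟨⟨f, rfl⟩, fun i => ⟨_, hk i⟩⟩, rfl⟩))

lemma exists_mem_hull_sat {s : Sg.Sorts} {φ : Formula Sg} (hφ : φ.inPart sp (sp.sortPart s))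
    (n : ℕ) (ν : Assign A) (hν : ∀ t m, φ.varFree t m → ν t m ∈ hull sp A S t)
    (h : ∃ a, Sat A (ν.update s n a) φ) : ∃ b ∈ hull sp A S s, Sat A (ν.update s n b) φ := by
  have := φ.finite_freeVars.to_subtype
  obtain ⟨k, hk⟩ := (eventually_all.2 fun v : φ.freeVars =>
    eventually_mem_iterate_hullStep S (hν v.1.1 v.1.2 v.2)).exists
  simp only [← φ.sat_update_assignOf_iff ν] at h ⊢
  exact ⟨_, iterate_hullStep_succ_subset_hull S k s
    (.inr ⟨⟨⟨φ, hφ⟩, n, fun v => ⟨_, hk v⟩⟩, rfl⟩), sat_update_witness h⟩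

end Hull

section HullCard

variable {sp : Split Sg Λ} {A : Structure Sg} {κ : Λ → Cardinal}

lemma mk_hullStep_le (hκ : ∀ l, max ℵ₀ (sp.partCard l) ≤ κ l) {D : ∀ s, Set (A.dom s)}
    (hD : ∀ t, #(D t) ≤ κ (sp.sortPart t)) (s : Sg.Sorts) :
    #(hullStep sp A D s) ≤ κ (sp.sortPart s) := by
  have hℵ₀ : ℵ₀ ≤ κ (sp.sortPart s) := (le_max_left _ _).trans (hκ _)
  have hD' : ∀ t, sp.sortPart t = sp.sortPart s → #(D t) ≤ κ (sp.sortPart s) :=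
    fun t ht => ht ▸ hD t
  refine (mk_union_le _ _).trans <| add_le_of_le hℵ₀ ((mk_union_le _ _).trans <|
    add_le_of_le hℵ₀ (hD s) (mk_range_le.trans ?_)) (mk_range_le.trans ?_)
  · refine mk_sigma_le_of_le hℵ₀ ?_ fun f => mk_pi_le_of_finite hℵ₀ fun i =>
      hD' _ (by rw [sp.func_dom, ← sp.func_cod, f.2])
    exact (mk_subtype_mono fun f (hf : Sg.funcCod f = s) => hf ▸ (sp.func_cod f).symm).trans <|
      (sp.mk_funcs_le_partCard _).trans <| (le_max_right _ _).trans (hκ _)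
  · refine mk_sigma_le_of_le hℵ₀ ((Formula.mk_inPart_le sp _).trans (hκ _)) fun φ => ?_
    have := φ.1.finite_freeVars.to_subtype
    rw [mk_prod, lift_id, lift_id, mk_nat]
    exact mul_le_of_le hℵ₀ hℵ₀ <| mk_pi_le_of_finite hℵ₀ fun v =>
      hD' _ (Formula.sortPart_of_varFree sp φ.1 φ.2 v.2)

lemma mk_iterate_hullStep_le (hκ : ∀ l, max ℵ₀ (sp.partCard l) ≤ κ l)
    {S : ∀ s, Set (A.dom s)} (hS : ∀ s, #(S s) ≤ κ (sp.sortPart s)) (k : ℕ) (s : Sg.Sorts) :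
    #((hullStep sp A)^[k] S s) ≤ κ (sp.sortPart s) := by
  induction k generalizing s with
  | zero => exact hS s
  | succ k ih =>
    rw [Function.iterate_succ_apply']
    exact mk_hullStep_le hκ ih s

lemma mk_hull_le (hκ : ∀ l, max ℵ₀ (sp.partCard l) ≤ κ l) {S : ∀ s, Set (A.dom s)}
    (hS : ∀ s, #(S s) ≤ κ (sp.sortPart s)) (s : Sg.Sorts) :
    #(hull sp A S s) ≤ κ (sp.sortPart s) := by
  have hℵ₀ : ℵ₀ ≤ κ (sp.sortPart s) := (le_max_left _ _).trans (hκ _)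
  exact (mk_iUnion_le _).trans <| mul_le_of_le hℵ₀ (mk_nat ▸ hℵ₀) <|
    ciSup_le' fun k => mk_iterate_hullStep_le hκ hS k s

theorem exists_isElementary_subset_mk_le (hκ : ∀ l, max ℵ₀ (sp.partCard l) ≤ κ l)
    (S : ∀ s, Set (A.dom s)) (hS : ∀ s, #(S s) ≤ κ (sp.sortPart s)) :
    ∃ B : Substructure A, B.IsElementary ∧ (∀ s, S s ⊆ B.carrier s) ∧
      ∀ s, #(B.carrier s) ≤ κ (sp.sortPart s) := by
  let B : Substructure A :=
    { carrier := hull sp A S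
      -- every sort of the hull contains a witness for the tautology `¬⊥`
      carrier_nonempty := fun s =>
        let ⟨b, hb, _⟩ := exists_mem_hull_sat S (φ := Formula.falsum.not) ⟨trivial, trivial⟩ 0
          (fun t _ => Classical.choice (A.dom_nonempty t)) (fun _ _ h => h.elim nofun nofun)
          ⟨Classical.choice (A.dom_nonempty s), id⟩
        ⟨b, hb⟩
      closed := interpFunc_mem_hull S }
  exact ⟨B, B.isElementary_of_exists sp fun s φ hφ n ν hν h =>
    exists_mem_hull_sat S hφ n ν (fun t m _ => hν t m) h, subset_hull S, mk_hull_le hκ hS⟩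

end HullCard

end MS

open MS Cardinal

/-- Downward Löwenheim–Skolem for split signatures: a different target cardinal
`κ_λ` may be chosen for each part `λ` of the splitting. -/
theorem split_downward_LS {Sg : MSSignature} {Λ : Type} (sp : Split Sg Λ)
    (A : Structure Sg) (κ : Λ → Cardinal)
    (hlow : ∀ l : Λ, max ℵ₀ (sp.partCard l) ≤ κ l)
    (hhigh : ∀ s : Sg.Sorts, Infinite (A.dom s) → κ (sp.sortPart s) ≤ #(A.dom s))
    (Asets : ∀ s : Sg.Sorts, Set (A.dom s))
    (hAsets : ∀ s : Sg.Sorts, Infinite (A.dom s) → #(Asets s) ≤ κ (sp.sortPart s)) :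
    ∃ B : Substructure A, B.IsElementary ∧
      (∀ s : Sg.Sorts, Infinite (A.dom s) →
        #(B.carrier s) = κ (sp.sortPart s) ∧ Asets s ⊆ B.carrier s) ∧
      (∀ s : Sg.Sorts, Finite (A.dom s) → B.carrier s = Set.univ) := by
  have hℵ₀ : ∀ l, ℵ₀ ≤ κ l := fun l => (le_max_left _ _).trans (hlow l)
  have hbase : ∀ s, ∃ S : Set (A.dom s), Asets s ⊆ S ∧ #S ≤ κ (sp.sortPart s) ∧
      (Infinite (A.dom s) → κ (sp.sortPart s) ≤ #S) ∧ (Finite (A.dom s) → S = Set.univ) := by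
    intro s
    rcases finite_or_infinite (A.dom s) with hfin | hinf
    · exact ⟨Set.univ, Set.subset_univ _, (lt_aleph0_of_finite _).le.trans (hℵ₀ _),
        fun hinf => (not_finite_iff_infinite.2 hinf hfin).elim, fun _ => rfl⟩
    · obtain ⟨S, hAS, hS⟩ := exists_superset_mk_eq (hℵ₀ _) (hAsets s hinf) (hhigh s hinf)
      exact ⟨S, hAS, hS.le, fun _ => hS.ge, fun hfin => (not_finite_iff_infinite.2 hinf hfin).elim⟩
  choose S hAS hSκ hκS hSuniv using hbase
  obtain ⟨B, hB, hSB, hBκ⟩ := exists_isElementary_subset_mk_le hlow S hSκ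
  exact ⟨B, hB, fun s hs => ⟨(hBκ s).antisymm ((hκS s hs).trans (mk_le_mk_of_subset (hSB s))),
    (hAS s).trans (hSB s)⟩, fun s hs => Set.eq_univ_of_univ_subset (hSuniv s hs ▸ hSB s)⟩
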